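/- arXiv:2412.18449 — 3 statements merged into one kernel-verified Lean document; each statement's English description precedes it below -/
import Mathlib

section
/- Let 𝔾 be a finite two-player game and (𝔾̄, ι₁, ι₂) a duplicate extension of 𝔾. Fix μ ≥ 0, n ∈ {1, 2}, a profile σ̄ ∈ Σ̄ = Σ̄₁ × Σ̄₂ and a mixed strategy τ̄ₙ ∈ Σ̄ₙ. Then τ̄ₙ is a μ-reply to σ̄ in 𝔾̄ if and only if rₙ(τ̄ₙ) is a μ-reply to r(σ̄) in 𝔾; in particular the pure-strategy payoff maxima agree: max over s̄ₙ ∈ S̄ₙ of Ḡₙ(s̄ₙ, σ̄₋ₙ) equals max over sₙ ∈ Sₙ of Gₙ(sₙ, r₋ₙ(σ̄₋ₙ)). -/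
open Finset

noncomputable section

/-- The Dirac (vertex) mixed strategy concentrated on the pure strategy `s`. -/
def dirac {S : Type*} [DecidableEq S] (s : S) : S → ℝ :=
  fun t => if t = s then 1 else 0

/-- Bilinear extension of a two-player payoff function to mixed strategies. -/
def mixedPayoff {S1 S2 : Type*} [Fintype S1] [Fintype S2]
    (G : S1 → S2 → ℝ) (x : S1 → ℝ) (y : S2 → ℝ) : ℝ :=
  ∑ s1 : S1, ∑ s2 : S2, x s1 * y s2 * G s1 s2

/-- Nash equilibrium of a finite two-player game. -/
def IsNash {S1 S2 : Type*} [Fintype S1] [Fintype S2] [DecidableEq S1] [DecidableEq S2]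
    (G1 G2 : S1 → S2 → ℝ) (x : S1 → ℝ) (y : S2 → ℝ) : Prop :=
  (∀ s1 : S1, mixedPayoff G1 (dirac s1) y ≤ mixedPayoff G1 x y) ∧
  (∀ s2 : S2, mixedPayoff G2 x (dirac s2) ≤ mixedPayoff G2 x y)

/-- `t` is a `μ`-reply for player 1 against the opponent strategy `y`. -/
def IsReply1 {S1 S2 : Type*} [Fintype S1] [Fintype S2] [DecidableEq S1]
    (G1 : S1 → S2 → ℝ) (μ : ℝ) (t : S1 → ℝ) (y : S2 → ℝ) : Prop :=
  ∀ s1 : S1, mixedPayoff G1 (dirac s1) y - μ ≤ mixedPayoff G1 t y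

/-- `t` is a `μ`-reply for player 2 against the opponent strategy `x`. -/
def IsReply2 {S1 S2 : Type*} [Fintype S1] [Fintype S2] [DecidableEq S2]
    (G2 : S1 → S2 → ℝ) (μ : ℝ) (t : S2 → ℝ) (x : S1 → ℝ) : Prop :=
  ∀ s2 : S2, mixedPayoff G2 x (dirac s2) - μ ≤ mixedPayoff G2 x t

/-- A duplicate extension of the finite two-player game `(G1, G2)`: a game `(H1, H2)`
whose pure strategies are duplicates of mixed strategies of the base game, containing
the original pure strategies as vertices. -/
structure DuplicateExtension {S1 S2 T1 T2 : Type*}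
    [Fintype S1] [Fintype S2] [Fintype T1] [Fintype T2]
    [DecidableEq S1] [DecidableEq S2]
    (G1 G2 : S1 → S2 → ℝ) (H1 H2 : T1 → T2 → ℝ) where
  e1 : S1 ↪ T1
  e2 : S2 ↪ T2
  iota1 : T1 → S1 → ℝ
  iota2 : T2 → S2 → ℝ
  iota1_mem : ∀ t1, iota1 t1 ∈ stdSimplex ℝ S1
  iota2_mem : ∀ t2, iota2 t2 ∈ stdSimplex ℝ S2
  iota1_vertex : ∀ s1, iota1 (e1 s1) = dirac s1
  iota2_vertex : ∀ s2, iota2 (e2 s2) = dirac s2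
  payoff1_eq : ∀ t1 t2, H1 t1 t2 = mixedPayoff G1 (iota1 t1) (iota2 t2)
  payoff2_eq : ∀ t1 t2, H2 t1 t2 = mixedPayoff G2 (iota1 t1) (iota2 t2)

/-- The base-game mixed strategy equivalent to a mixed strategy of a duplicate extension. -/
def reduceStrat {S T : Type*} [Fintype T] (iota : T → S → ℝ) (z : T → ℝ) : S → ℝ :=
  fun s => ∑ t : T, z t * iota t s

/-- The set of mixed strategy profiles of a two-player game. -/
def simplexProd (S1 S2 : Type*) [Fintype S1] [Fintype S2] :
    Set ((S1 → ℝ) × (S2 → ℝ)) :=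
  (stdSimplex ℝ S1) ×ˢ (stdSimplex ℝ S2)

section Aux

variable {S1 S2 : Type*} [Fintype S1] [Fintype S2]

lemma mixedPayoff_eq_sum (G : S1 → S2 → ℝ) (x : S1 → ℝ) (y : S2 → ℝ) :
    mixedPayoff G x y = ∑ s1 : S1, x s1 * ∑ s2 : S2, y s2 * G s1 s2 := by
  simp [mixedPayoff, Finset.mul_sum, mul_assoc]

lemma mixedPayoff_dirac_left [DecidableEq S1] (G : S1 → S2 → ℝ) (s : S1) (y : S2 → ℝ) :
    mixedPayoff G (dirac s) y = ∑ s2 : S2, y s2 * G s s2 := by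
  rw [mixedPayoff_eq_sum]
  simp [dirac, ite_mul, Finset.sum_ite_eq']

lemma mixedPayoff_dirac_right [DecidableEq S2] (G : S1 → S2 → ℝ) (x : S1 → ℝ) (s : S2) :
    mixedPayoff G x (dirac s) = ∑ s1 : S1, x s1 * G s1 s := by
  simp [mixedPayoff, dirac, mul_ite, ite_mul, Finset.sum_ite_eq']

lemma mixedPayoff_expand1 [DecidableEq S1] (G : S1 → S2 → ℝ) (x : S1 → ℝ) (y : S2 → ℝ) :
    mixedPayoff G x y = ∑ s1 : S1, x s1 * mixedPayoff G (dirac s1) y := by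
  rw [mixedPayoff_eq_sum]
  simp [mixedPayoff_dirac_left]

lemma mixedPayoff_expand2 [DecidableEq S2] (G : S1 → S2 → ℝ) (x : S1 → ℝ) (y : S2 → ℝ) :
    mixedPayoff G x y = ∑ s2 : S2, y s2 * mixedPayoff G x (dirac s2) := by
  simp only [mixedPayoff_dirac_right, Finset.mul_sum]
  rw [mixedPayoff, Finset.sum_comm]
  apply Finset.sum_congr rfl; intro s2 _
  apply Finset.sum_congr rfl; intro s1 _
  ring

lemma reduceStrat_dirac {T : Type*} [Fintype T] [DecidableEq T] (iota : T → S1 → ℝ) (t : T) :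
    reduceStrat iota (dirac t) = iota t := by
  funext s
  simp [reduceStrat, dirac, ite_mul, Finset.sum_ite_eq']

lemma mixedPayoff_eq_sum2 (G : S1 → S2 → ℝ) (x : S1 → ℝ) (y : S2 → ℝ) :
    mixedPayoff G x y = ∑ s2 : S2, y s2 * ∑ s1 : S1, x s1 * G s1 s2 := by
  rw [mixedPayoff, Finset.sum_comm]
  simp only [Finset.mul_sum]
  exact Finset.sum_congr rfl fun s2 _ => Finset.sum_congr rfl fun s1 _ => by ring

lemma mixedPayoff_lin1 {T : Type*} [Fintype T] (G : S1 → S2 → ℝ)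
    (iota : T → S1 → ℝ) (w : T → ℝ) (y : S2 → ℝ) :
    mixedPayoff G (reduceStrat iota w) y = ∑ t : T, w t * mixedPayoff G (iota t) y := by
  rw [mixedPayoff_eq_sum]
  simp only [reduceStrat, Finset.sum_mul]
  rw [Finset.sum_comm]
  simp only [mixedPayoff_eq_sum, Finset.mul_sum]
  exact Finset.sum_congr rfl fun t _ => Finset.sum_congr rfl fun s1 _ => Finset.sum_congr rfl fun _ _ => by ring

lemma mixedPayoff_lin2 {T : Type*} [Fintype T] (G : S1 → S2 → ℝ)
    (iota : T → S2 → ℝ) (x : S1 → ℝ) (z : T → ℝ) :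
    mixedPayoff G x (reduceStrat iota z) = ∑ t : T, z t * mixedPayoff G x (iota t) := by
  rw [mixedPayoff_eq_sum2]
  simp only [reduceStrat, Finset.sum_mul]
  rw [Finset.sum_comm]
  simp only [mixedPayoff_eq_sum2, Finset.mul_sum]
  exact Finset.sum_congr rfl fun t _ => Finset.sum_congr rfl fun s2 _ => Finset.sum_congr rfl fun _ _ => by ring

lemma convex_comb_le {ι : Type*} [Fintype ι] {p : ι → ℝ} (hp : p ∈ stdSimplex ℝ ι)
    {f : ι → ℝ} {C : ℝ} (h : ∀ i, f i ≤ C) : ∑ i : ι, p i * f i ≤ C := by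
  calc ∑ i : ι, p i * f i ≤ ∑ i : ι, p i * C :=
        Finset.sum_le_sum fun i _ => mul_le_mul_of_nonneg_left (h i) (hp.1 i)
    _ = C := by rw [← Finset.sum_mul, hp.2, one_mul]

end Aux

/-- In a duplicate extension, `μ`-replies correspond to `μ`-replies of
the equivalent strategies in the base game (stated for each of the two players), and the
pure-strategy payoff maxima in the extension and in the base game agree. -/
theorem duplicate_extension_mu_reply_invariance
    {S1 S2 T1 T2 : Type*}
    [Fintype S1] [Fintype S2] [Fintype T1] [Fintype T2]
    [DecidableEq S1] [DecidableEq S2] [DecidableEq T1] [DecidableEq T2]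
    [Nonempty S1] [Nonempty S2] [Nonempty T1] [Nonempty T2]
    (G1 G2 : S1 → S2 → ℝ) (H1 H2 : T1 → T2 → ℝ)
    (E : DuplicateExtension G1 G2 H1 H2)
    (μ : ℝ) (hμ : 0 ≤ μ)
    (z1 : T1 → ℝ) (z2 : T2 → ℝ)
    (hz1 : z1 ∈ stdSimplex ℝ T1) (hz2 : z2 ∈ stdSimplex ℝ T2)
    (w1 : T1 → ℝ) (w2 : T2 → ℝ)
    (hw1 : w1 ∈ stdSimplex ℝ T1) (hw2 : w2 ∈ stdSimplex ℝ T2) :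
    (IsReply1 H1 μ w1 z2 ↔
      IsReply1 G1 μ (reduceStrat E.iota1 w1) (reduceStrat E.iota2 z2)) ∧
    (IsReply2 H2 μ w2 z1 ↔
      IsReply2 G2 μ (reduceStrat E.iota2 w2) (reduceStrat E.iota1 z1)) ∧
    (Finset.univ.sup' Finset.univ_nonempty
        (fun t1 : T1 => mixedPayoff H1 (dirac t1) z2)
      = Finset.univ.sup' Finset.univ_nonempty
        (fun s1 : S1 => mixedPayoff G1 (dirac s1) (reduceStrat E.iota2 z2))) ∧
    (Finset.univ.sup' Finset.univ_nonempty
        (fun t2 : T2 => mixedPayoff H2 z1 (dirac t2))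
      = Finset.univ.sup' Finset.univ_nonempty
        (fun s2 : S2 => mixedPayoff G2 (reduceStrat E.iota1 z1) (dirac s2))) := by

  obtain ⟨e1, e2, ι1, ι2, h1m, h2m, h1v, h2v, hp1, hp2⟩ := E
  have key1 : ∀ (w : T1 → ℝ) (z : T2 → ℝ),
      mixedPayoff H1 w z = mixedPayoff G1 (reduceStrat ι1 w) (reduceStrat ι2 z) := by
    intro w z
    rw [mixedPayoff_lin1]
    simp only [mixedPayoff_lin2]
    conv_lhs => rw [mixedPayoff]
    simp only [hp1, Finset.mul_sum]
    exact Finset.sum_congr rfl fun t1 _ => Finset.sum_congr rfl fun t2 _ => by ring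
  have key2 : ∀ (w : T1 → ℝ) (z : T2 → ℝ),
      mixedPayoff H2 w z = mixedPayoff G2 (reduceStrat ι1 w) (reduceStrat ι2 z) := by
    intro w z
    rw [mixedPayoff_lin1]
    simp only [mixedPayoff_lin2]
    conv_lhs => rw [mixedPayoff]
    simp only [hp2, Finset.mul_sum]
    exact Finset.sum_congr rfl fun t1 _ => Finset.sum_congr rfl fun t2 _ => by ring
  have hd1 : ∀ (t1 : T1) (z : T2 → ℝ),
      mixedPayoff H1 (dirac t1) z = mixedPayoff G1 (ι1 t1) (reduceStrat ι2 z) := by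
    intro t1 z; rw [key1, reduceStrat_dirac]
  have hd2 : ∀ (t2 : T2) (z : T1 → ℝ),
      mixedPayoff H2 z (dirac t2) = mixedPayoff G2 (reduceStrat ι1 z) (ι2 t2) := by
    intro t2 z; rw [key2, reduceStrat_dirac]
  refine ⟨?_, ?_, ?_, ?_⟩
  · constructor
    · intro h s1
      have := h (e1 s1)
      rwa [hd1, h1v, key1] at this
    · intro h t1
      rw [hd1, key1]
      have : mixedPayoff G1 (ι1 t1) (reduceStrat ι2 z2)
          = ∑ s1 : S1, ι1 t1 s1 * mixedPayoff G1 (dirac s1) (reduceStrat ι2 z2) :=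
        mixedPayoff_expand1 _ _ _
      rw [this]
      have hb := convex_comb_le (h1m t1)
        (f := fun s1 => mixedPayoff G1 (dirac s1) (reduceStrat ι2 z2))
        (C := mixedPayoff G1 (reduceStrat ι1 w1) (reduceStrat ι2 z2) + μ)
        (fun s1 => by linarith [h s1])
      linarith
  · constructor
    · intro h s2
      have := h (e2 s2)
      rwa [hd2, h2v, key2] at this
    · intro h t2
      rw [hd2, key2]
      have : mixedPayoff G2 (reduceStrat ι1 z1) (ι2 t2)
          = ∑ s2 : S2, ι2 t2 s2 * mixedPayoff G2 (reduceStrat ι1 z1) (dirac s2) :=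
        mixedPayoff_expand2 _ _ _
      rw [this]
      have hb := convex_comb_le (h2m t2)
        (f := fun s2 => mixedPayoff G2 (reduceStrat ι1 z1) (dirac s2))
        (C := mixedPayoff G2 (reduceStrat ι1 z1) (reduceStrat ι2 w2) + μ)
        (fun s2 => by linarith [h s2])
      linarith
  · apply le_antisymm
    · apply Finset.sup'_le
      intro t1 _
      rw [hd1, mixedPayoff_expand1]
      exact convex_comb_le (h1m t1) fun s1 =>
        Finset.le_sup' (fun s1 : S1 => mixedPayoff G1 (dirac s1) (reduceStrat ι2 z2))
          (Finset.mem_univ s1)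
    · apply Finset.sup'_le
      intro s1 _
      have : mixedPayoff G1 (dirac s1) (reduceStrat ι2 z2)
          = mixedPayoff H1 (dirac (e1 s1)) z2 := by rw [hd1, h1v]
      rw [this]
      exact Finset.le_sup' (fun t1 : T1 => mixedPayoff H1 (dirac t1) z2)
        (Finset.mem_univ (e1 s1))
  · apply le_antisymm
    · apply Finset.sup'_le
      intro t2 _
      rw [hd2, mixedPayoff_expand2]
      exact convex_comb_le (h2m t2) fun s2 =>
        Finset.le_sup' (fun s2 : S2 => mixedPayoff G2 (reduceStrat ι1 z1) (dirac s2))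
          (Finset.mem_univ s2)
    · apply Finset.sup'_le
      intro s2 _
      have : mixedPayoff G2 (reduceStrat ι1 z1) (dirac s2)
          = mixedPayoff H2 z1 (dirac (e2 s2)) := by rw [hd2, h2v]
      rw [this]
      exact Finset.le_sup' (fun t2 : T2 => mixedPayoff H2 z1 (dirac t2))
        (Finset.mem_univ (e2 s2))
end
end

section
/- Let 𝔾 be a finite two-player game and let BR : Σ ⇉ Σ be its best-reply correspondence, i.e. τ ∈ BR(σ) if and only if τₙ is a 0-reply to σ for n = 1, 2. For μ > 0 set W(μ) = {(σ, τ) ∈ Σ × Σ : τₙ is a μ-reply to σ for n = 1, 2}. Then the family {W(μ)}_{μ > 0} is a basis of neighborhoods of the graph of BR in Σ × Σ: (i) for every μ > 0 there exists a set U, open in Σ × Σ, with Graph(BR) ⊆ U ⊆ W(μ); and (ii) for every set W, open in Σ × Σ, with Graph(BR) ⊆ W, there exists μ > 0 such that W(μ) ⊆ W. -/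
/-!
Write `rᵢ` for the regrets of the two players, one for each pure strategy: the payoff that pure
strategy earns against `σ` minus the payoff of `τ`. These are finitely many continuous functions
on `Σ × Σ`, and `W(μ)` is the part of the compact set `Σ × Σ` where all `rᵢ ≤ μ`, while the graph
is the part where all `rᵢ ≤ 0`. The strict sublevel set `{rᵢ < μ for all i}` is open and sits
between the two. Conversely, if an open `V` contains the graph, the compact sets `W(μ) \ V` are
nested with empty intersection, so one of them is already empty.
-/

open Finset

noncomputable section

open Set

section Sublevel

variable {X ι : Type*} [TopologicalSpace X] {f : ι → X → ℝ}

theorem exists_isOpen_between_sublevels [Finite ι] (hf : ∀ i, Continuous (f i)) {μ : ℝ}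
    (hμ : 0 < μ) :
    ∃ U : Set X, IsOpen U ∧ {x | ∀ i, f i x ≤ 0} ⊆ U ∧ U ⊆ {x | ∀ i, f i x ≤ μ} := by
  refine ⟨⋂ i, {x | f i x < μ}, isOpen_iInter_of_finite fun i => isOpen_lt (hf i) continuous_const,
    fun x hx => mem_iInter.2 fun i => (hx i).trans_lt hμ, fun x hx i => ?_⟩
  exact (mem_iInter.1 hx i).le

theorem exists_pos_inter_sublevel_subset (hf : ∀ i, Continuous (f i)) {K V : Set X}
    (hK : IsCompact K) (hV : IsOpen V) (hKV : K ∩ {x | ∀ i, f i x ≤ 0} ⊆ V) :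
    ∃ μ > (0 : ℝ), K ∩ {x | ∀ i, f i x ≤ μ} ⊆ V := by
  let sublevel : Ioi (0 : ℝ) → Set X := fun μ => {x | ∀ i, f i x ≤ μ}
  have hclosed : ∀ μ, IsClosed (sublevel μ) := fun μ => by
    simp only [sublevel, ofPred_forall]
    exact isClosed_iInter fun i => isClosed_le (hf i) continuous_const
  have hdirected : Directed (· ⊇ ·) sublevel := fun μ ν =>
    ⟨⟨min μ ν, mem_Ioi.2 (lt_min μ.2 ν.2)⟩, fun x hx i => (hx i).trans (min_le_left _ _),
      fun x hx i => (hx i).trans (min_le_right _ _)⟩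
  have hempty : (K \ V) ∩ ⋂ μ, sublevel μ = ∅ := by
    refine eq_empty_of_forall_notMem fun x ⟨⟨hxK, hxV⟩, hx⟩ => hxV (hKV ⟨hxK, fun i => ?_⟩)
    exact le_of_forall_pos_le_add fun ε hε => by
      simpa using mem_iInter.1 hx ⟨ε, hε⟩ i
  have : Nonempty (Ioi (0 : ℝ)) := ⟨⟨1, mem_Ioi.2 one_pos⟩⟩
  obtain ⟨μ, hμ⟩ := (hK.diff hV).elim_directed_family_closed sublevel hclosed hempty hdirected
  refine ⟨μ, μ.2, fun x ⟨hxK, hx⟩ => by_contra fun hxV => ?_⟩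
  exact (eq_empty_iff_forall_notMem.1 hμ) x ⟨⟨hxK, hxV⟩, hx⟩

end Sublevel

section Regret

variable {S1 S2 : Type*} [Fintype S1] [Fintype S2]

@[fun_prop]
theorem Continuous.mixedPayoff {α : Type*} [TopologicalSpace α] (G : S1 → S2 → ℝ)
    {x : α → S1 → ℝ} {y : α → S2 → ℝ} (hx : Continuous x) (hy : Continuous y) :
    Continuous fun a => mixedPayoff G (x a) (y a) := by
  unfold _root_.mixedPayoff
  fun_prop

variable [DecidableEq S1] [DecidableEq S2]

def replyRegret (G1 G2 : S1 → S2 → ℝ) :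
    S1 ⊕ S2 → ((S1 → ℝ) × (S2 → ℝ)) × ((S1 → ℝ) × (S2 → ℝ)) → ℝ
  | .inl s1 => fun p => mixedPayoff G1 (dirac s1) p.1.2 - mixedPayoff G1 p.2.1 p.1.2
  | .inr s2 => fun p => mixedPayoff G2 p.1.1 (dirac s2) - mixedPayoff G2 p.1.1 p.2.2

theorem continuous_replyRegret (G1 G2 : S1 → S2 → ℝ) (i : S1 ⊕ S2) :
    Continuous (replyRegret G1 G2 i) := by
  cases i <;> simp only [replyRegret] <;> fun_prop

theorem isReply_iff_forall_replyRegret_le (G1 G2 : S1 → S2 → ℝ) (μ : ℝ)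
    (p : ((S1 → ℝ) × (S2 → ℝ)) × ((S1 → ℝ) × (S2 → ℝ))) :
    IsReply1 G1 μ p.2.1 p.1.2 ∧ IsReply2 G2 μ p.2.2 p.1.1 ↔
      ∀ i, replyRegret G1 G2 i p ≤ μ := by
  simp only [IsReply1, IsReply2, Sum.forall, replyRegret, sub_le_iff_le_add, add_comm μ]

end Regret

theorem mu_reply_sets_basis_of_best_reply_graph_general
    {S1 S2 : Type*} [Fintype S1] [Fintype S2] [DecidableEq S1] [DecidableEq S2]
    (G1 G2 : S1 → S2 → ℝ)
    (graphBR : Set (((S1 → ℝ) × (S2 → ℝ)) × ((S1 → ℝ) × (S2 → ℝ))))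
    (hgraph : graphBR = {p | p.1 ∈ simplexProd S1 S2 ∧ p.2 ∈ simplexProd S1 S2 ∧
      IsReply1 G1 0 p.2.1 p.1.2 ∧ IsReply2 G2 0 p.2.2 p.1.1})
    (W : ℝ → Set (((S1 → ℝ) × (S2 → ℝ)) × ((S1 → ℝ) × (S2 → ℝ))))
    (hW : ∀ μ : ℝ, W μ = {p | p.1 ∈ simplexProd S1 S2 ∧ p.2 ∈ simplexProd S1 S2 ∧
      IsReply1 G1 μ p.2.1 p.1.2 ∧ IsReply2 G2 μ p.2.2 p.1.1}) :
    (∀ μ > (0 : ℝ), ∃ U : Set (((S1 → ℝ) × (S2 → ℝ)) × ((S1 → ℝ) × (S2 → ℝ))),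
      IsOpen U ∧
      graphBR ⊆ U ∩ (simplexProd S1 S2 ×ˢ simplexProd S1 S2) ∧
      U ∩ (simplexProd S1 S2 ×ˢ simplexProd S1 S2) ⊆ W μ) ∧
    (∀ V : Set (((S1 → ℝ) × (S2 → ℝ)) × ((S1 → ℝ) × (S2 → ℝ))),
      IsOpen V → graphBR ⊆ V ∩ (simplexProd S1 S2 ×ˢ simplexProd S1 S2) →
      ∃ μ > (0 : ℝ), W μ ⊆ V ∩ (simplexProd S1 S2 ×ˢ simplexProd S1 S2)) := by
  set K := simplexProd S1 S2 ×ˢ simplexProd S1 S2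
  have hK : IsCompact K := by
    have := (isCompact_stdSimplex ℝ S1).prod (isCompact_stdSimplex ℝ S2)
    exact this.prod this
  have hWK : ∀ μ, W μ = K ∩ {p | ∀ i, replyRegret G1 G2 i p ≤ μ} := fun μ => by
    ext p
    simp only [hW, ← isReply_iff_forall_replyRegret_le, K, mem_inter_iff, mem_prod,
      mem_ofPred_eq, and_assoc]
  have hgraphW : graphBR = W 0 := by rw [hgraph, hW]
  refine ⟨fun μ hμ => ?_, fun V hV hsub => ?_⟩
  · obtain ⟨U, hU, h0U, hUμ⟩ :=
      exists_isOpen_between_sublevels (continuous_replyRegret G1 G2) hμ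
    refine ⟨U, hU, ?_, ?_⟩
    · rw [hgraphW, hWK]
      exact fun p ⟨hpK, hp⟩ => ⟨h0U hp, hpK⟩
    · rw [hWK]
      exact fun p ⟨hpU, hpK⟩ => ⟨hpK, hUμ hpU⟩
  · obtain ⟨μ, hμ, hμV⟩ := exists_pos_inter_sublevel_subset (continuous_replyRegret G1 G2) hK hV
      (by rw [← hWK, ← hgraphW]; exact fun p hp => (hsub hp).1)
    refine ⟨μ, hμ, ?_⟩
    rw [hWK]
    exact fun p ⟨hpK, hp⟩ => ⟨hμV ⟨hpK, hp⟩, hpK⟩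

/-- The sets `W(μ)` of profile pairs `(σ, τ)` with `τₙ` a `μ`-reply to
`σ` form a basis of neighborhoods of the graph of the best-reply correspondence in
`Σ × Σ` (relative topology on `Σ × Σ` inside the ambient Euclidean space): (i) every
`W(μ)` contains a relatively open set containing the graph, and (ii) every relatively
open set containing the graph contains some `W(μ)`. -/
theorem mu_reply_sets_basis_of_best_reply_graph
    {S1 S2 : Type*} [Fintype S1] [Fintype S2] [DecidableEq S1] [DecidableEq S2]
    [Nonempty S1] [Nonempty S2]
    (G1 G2 : S1 → S2 → ℝ)
    (graphBR : Set (((S1 → ℝ) × (S2 → ℝ)) × ((S1 → ℝ) × (S2 → ℝ))))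
    (hgraph : graphBR = {p | p.1 ∈ simplexProd S1 S2 ∧ p.2 ∈ simplexProd S1 S2 ∧
      IsReply1 G1 0 p.2.1 p.1.2 ∧ IsReply2 G2 0 p.2.2 p.1.1})
    (W : ℝ → Set (((S1 → ℝ) × (S2 → ℝ)) × ((S1 → ℝ) × (S2 → ℝ))))
    (hW : ∀ μ : ℝ, W μ = {p | p.1 ∈ simplexProd S1 S2 ∧ p.2 ∈ simplexProd S1 S2 ∧
      IsReply1 G1 μ p.2.1 p.1.2 ∧ IsReply2 G2 μ p.2.2 p.1.1}) :
    (∀ μ > (0 : ℝ), ∃ U : Set (((S1 → ℝ) × (S2 → ℝ)) × ((S1 → ℝ) × (S2 → ℝ))),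
      IsOpen U ∧
      graphBR ⊆ U ∩ (simplexProd S1 S2 ×ˢ simplexProd S1 S2) ∧
      U ∩ (simplexProd S1 S2 ×ˢ simplexProd S1 S2) ⊆ W μ) ∧
    (∀ V : Set (((S1 → ℝ) × (S2 → ℝ)) × ((S1 → ℝ) × (S2 → ℝ))),
      IsOpen V → graphBR ⊆ V ∩ (simplexProd S1 S2 ×ˢ simplexProd S1 S2) →
      ∃ μ > (0 : ℝ), W μ ⊆ V ∩ (simplexProd S1 S2 ×ˢ simplexProd S1 S2)) :=
  mu_reply_sets_basis_of_best_reply_graph_general G1 G2 graphBR hgraph W hW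
end
end

section
/- Let A and B be nonempty finite sets and let Δ(A), Δ(B), Δ(A × B) denote the simplices of probability vectors on A, B and A × B respectively. Let e : Δ(A) × Δ(B) → Δ(A × B) be the product-strategy map, e(x, y)(a, b) = x(a)·y(b). If X ⊆ Δ(A) and Y ⊆ Δ(B) are nonempty convex subsets, then the set of product strategies e(X × Y) = {e(x, y) : x ∈ X, y ∈ Y}, endowed with the topology induced from Δ(A × B), is contractible: there exist a point z₀ ∈ e(X × Y) and a continuous map H : [0, 1] × e(X × Y) → e(X × Y) with H(0, z) = z and H(1, z) = z₀ for all z ∈ e(X × Y). (This is the mathematical content of the paper's lemma that the correspondence Φ^{ε₁,ε₂} is contractible-valued; the contraction is J(t, x ⊗ y) = ((1−t)x + t·x̌) ⊗ ((1−t)y + t·y̌), well defined because the two factors of a product strategy are its marginals.) -/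
noncomputable section

/-- The product strategy `x ⊗ y` on `A × B` induced by `x ∈ Δ(A)` and `y ∈ Δ(B)`. -/
def prodStrat {A B : Type*} (x : A → ℝ) (y : B → ℝ) : A × B → ℝ :=
  fun p => x p.1 * y p.2

/-- If `X ⊆ Δ(A)` and `Y ⊆ Δ(B)` are nonempty convex sets, then the set
of product strategies `e(X × Y) ⊆ Δ(A × B)`, with the subspace topology, is contractible:
there are a point `z₀` of it and a continuous `H : [0,1] × e(X × Y) → e(X × Y)` with
`H(0, ·) = id` and `H(1, ·) = z₀`. -/
theorem product_strategies_contractible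
    {A B : Type*} [Fintype A] [Fintype B] [Nonempty A] [Nonempty B]
    (X : Set (A → ℝ)) (Y : Set (B → ℝ))
    (hXsub : X ⊆ stdSimplex ℝ A) (hYsub : Y ⊆ stdSimplex ℝ B)
    (hXne : X.Nonempty) (hYne : Y.Nonempty)
    (hXconv : Convex ℝ X) (hYconv : Convex ℝ Y) :
    ∃ z₀ : Set.image2 prodStrat X Y,
      ∃ H : Set.Icc (0 : ℝ) 1 × Set.image2 prodStrat X Y → Set.image2 prodStrat X Y,
        Continuous H ∧
        (∀ z, H (⟨0, Set.left_mem_Icc.mpr zero_le_one⟩, z) = z) ∧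
        (∀ z, H (⟨1, Set.right_mem_Icc.mpr zero_le_one⟩, z) = z₀) := by
  classical
  obtain ⟨x₀, hx₀⟩ := hXne
  obtain ⟨y₀, hy₀⟩ := hYne
  set mA : (A × B → ℝ) → A → ℝ := fun z a => ∑ b, z (a, b) with hmA
  set mB : (A × B → ℝ) → B → ℝ := fun z b => ∑ a, z (a, b) with hmB
  have hmargA : ∀ x ∈ X, ∀ y ∈ Y, mA (prodStrat x y) = x := by
    intro x hx y hy; funext a
    simp [hmA, prodStrat, ← Finset.mul_sum, (hYsub hy).2]
  have hmargB : ∀ x ∈ X, ∀ y ∈ Y, mB (prodStrat x y) = y := by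
    intro x hx y hy; funext b
    simp [hmB, prodStrat, ← Finset.sum_mul, (hXsub hx).2]
  have key : ∀ (t : Set.Icc (0:ℝ) 1) (z : Set.image2 prodStrat X Y),
      prodStrat ((1 - t.1) • mA z.1 + t.1 • x₀) ((1 - t.1) • mB z.1 + t.1 • y₀)
        ∈ Set.image2 prodStrat X Y := by
    rintro ⟨t, ht0, ht1⟩ ⟨z, hz⟩
    obtain ⟨x, hx, y, hy, rfl⟩ := hz
    rw [hmargA x hx y hy, hmargB x hx y hy]
    exact Set.mem_image2_of_mem
      (hXconv hx hx₀ (by linarith) ht0 (by ring))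
      (hYconv hy hy₀ (by linarith) ht0 (by ring))
  refine ⟨⟨prodStrat x₀ y₀, Set.mem_image2_of_mem hx₀ hy₀⟩,
    fun p => ⟨prodStrat ((1 - p.1.1) • mA p.2.1 + p.1.1 • x₀)
      ((1 - p.1.1) • mB p.2.1 + p.1.1 • y₀), key p.1 p.2⟩, ?_, ?_, ?_⟩
  · apply Continuous.subtype_mk
    refine continuous_pi fun q => ?_
    have ht : Continuous fun p : Set.Icc (0:ℝ) 1 × Set.image2 prodStrat X Y => p.1.1 :=
      continuous_subtype_val.comp continuous_fst
    have hz : Continuous fun p : Set.Icc (0:ℝ) 1 × Set.image2 prodStrat X Y => p.2.1 :=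
      continuous_subtype_val.comp continuous_snd
    have hmAc : Continuous fun p : Set.Icc (0:ℝ) 1 × Set.image2 prodStrat X Y =>
        mA p.2.1 q.1 := by
      simp only [hmA]
      exact continuous_finset_sum _ fun b _ => (continuous_apply (q.1, b)).comp hz
    have hmBc : Continuous fun p : Set.Icc (0:ℝ) 1 × Set.image2 prodStrat X Y =>
        mB p.2.1 q.2 := by
      simp only [hmB]
      exact continuous_finset_sum _ fun a _ => (continuous_apply (a, q.2)).comp hz
    simp only [prodStrat, Pi.add_apply, Pi.smul_apply, smul_eq_mul]
    exact (((continuous_const.sub ht).mul hmAc).add (ht.mul continuous_const)).mul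
      (((continuous_const.sub ht).mul hmBc).add (ht.mul continuous_const))
  · rintro ⟨z, hz⟩
    obtain ⟨x, hx, y, hy, rfl⟩ := hz
    apply Subtype.ext
    simp [hmargA x hx y hy, hmargB x hx y hy]
  · rintro ⟨z, hz⟩
    apply Subtype.ext
    simp
end
end
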